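/- For n ≥ 8, let c_n = (-9 + √(12n - 3))/(12n) be the positive critical point of G_n(y) = 4n³y³ + 9n²y² + (7n - n²)y + 2. Then the critical value equals G_n(c_n) = (1/(24√3))·(3√3·(6n+1) - (4n-1)^{3/2}), and this expression is a strictly decreasing function of n for n ≥ 8. -/

import Mathlib

/-- The cubic `G_n(y) = 4n³y³ + 9n²y² + (7n - n²)y + 2`. -/
noncomputable def G (n : ℕ) (y : ℝ) : ℝ :=
  4*(n:ℝ)^3*y^3 + 9*(n:ℝ)^2*y^2 + (7*(n:ℝ) - (n:ℝ)^2)*y + 2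

/-- The positive critical point `c_n = (-9 + √(12n-3))/(12n)` of `G_n`. -/
noncomputable def cG (n : ℕ) : ℝ := (-9 + Real.sqrt (12*(n:ℝ) - 3)) / (12*(n:ℝ))

/-!
Writing `c_n = (s - 9)/(12n)` with `s = √(12n - 3)` and eliminating `n = (s² + 3)/12`, both
`G_n'(c_n)` and `G_n(c_n)` become polynomials in `s` alone: the first vanishes identically and the
second is `(s² + 5)/16 - s³/216`, whose derivative `s(9 - s)/72` is negative for `s > 9`.
Since `s = √3 · √(4n - 1)` grows with `n` and exceeds `9` once `n ≥ 8`, the closed form follows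
and decreases strictly in `n`.
-/

open Real Set

lemma hasDerivAt_G (n : ℕ) (y : ℝ) :
    HasDerivAt (G n) (12*(n:ℝ)^3*y^2 + 18*(n:ℝ)^2*y - n*(n - 7)) y := by
  have h := ((((hasDerivAt_pow 3 y).const_mul (4*(n:ℝ)^3)).add
    ((hasDerivAt_pow 2 y).const_mul (9*(n:ℝ)^2))).add
    ((hasDerivAt_id' y).const_mul (7*(n:ℝ) - (n:ℝ)^2))).add_const 2
  exact h.congr_deriv (by push_cast; ring)

lemma deriv_G_eq_zero_of_sq_eq {n : ℕ} {s : ℝ} (hs : s^2 = 12*n - 3) :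
    deriv (G n) ((-9 + s) / (12*n)) = 0 := by
  have hn : (n:ℝ) = (s^2 + 3)/12 := by linarith
  rw [(hasDerivAt_G n _).deriv, hn]
  field_simp
  ring

noncomputable def criticalValuePoly (s : ℝ) : ℝ := (s^2 + 5)/16 - s^3/216

lemma G_eq_criticalValuePoly_of_sq_eq {n : ℕ} {s : ℝ} (hs : s^2 = 12*n - 3) :
    G n ((-9 + s) / (12*n)) = criticalValuePoly s := by
  have hn : (n:ℝ) = (s^2 + 3)/12 := by linarith
  rw [G, criticalValuePoly, hn]
  field_simp
  ring

lemma hasDerivAt_criticalValuePoly (s : ℝ) :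
    HasDerivAt criticalValuePoly (s * (9 - s) / 72) s := by
  have h := ((((hasDerivAt_pow 2 s).add_const 5).div_const 16).sub
    ((hasDerivAt_pow 3 s).div_const 216))
  exact h.congr_deriv (by push_cast; ring)

lemma criticalValuePoly_strictAntiOn : StrictAntiOn criticalValuePoly (Ici 9) := by
  refine strictAntiOn_of_deriv_neg (convex_Ici 9)
    (fun s _ => (hasDerivAt_criticalValuePoly s).continuousAt.continuousWithinAt) fun s hs => ?_
  rw [interior_Ici, mem_Ioi] at hs
  rw [(hasDerivAt_criticalValuePoly s).deriv]
  nlinarith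

lemma sqrt_twelve_mul_sub_three (x : ℝ) : √(12*x - 3) = √3 * √(4*x - 1) := by
  rw [← sqrt_mul (by norm_num)]
  ring_nf

lemma criticalValuePoly_sqrt_three_mul {x t : ℝ} (ht : t^2 = 4*x - 1) :
    criticalValuePoly (√3 * t) = 1 / (24 * √3) * (3 * √3 * (6*x + 1) - t^3) := by
  have h3 : √3^2 = 3 := sq_sqrt (by norm_num)
  have hx : x = (t^2 + 1)/4 := by linarith
  rw [criticalValuePoly, hx]
  field_simp
  linear_combination (20736 * t^2 * √3 - 1536 * t^3 * (√3^2 + 3)) * h3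

lemma nine_lt_sqrt_twelve_mul_sub_three {x : ℝ} (hx : 7 < x) : 9 < √(12*x - 3) := by
  rw [lt_sqrt (by norm_num)]
  linarith

/-- For `n ≥ 8`, `c_n` is the positive critical point of `G_n`, the critical value is
`G_n(c_n) = (1/(24√3))·(3√3(6n+1) - (4n-1)^{3/2})`, and this expression is strictly
decreasing in `n` for `n ≥ 8`. -/
theorem Gn_critical_value (n : ℕ) (hn : 8 ≤ n) :
    0 < cG n ∧ deriv (G n) (cG n) = 0 ∧
    G n (cG n) = (1 / (24 * Real.sqrt 3)) *
      (3 * Real.sqrt 3 * (6*(n:ℝ) + 1) - (Real.sqrt (4*(n:ℝ) - 1))^3) ∧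
    (∀ m k : ℕ, 8 ≤ m → m < k →
      (1 / (24 * Real.sqrt 3)) *
          (3 * Real.sqrt 3 * (6*(k:ℝ) + 1) - (Real.sqrt (4*(k:ℝ) - 1))^3) <
        (1 / (24 * Real.sqrt 3)) *
          (3 * Real.sqrt 3 * (6*(m:ℝ) + 1) - (Real.sqrt (4*(m:ℝ) - 1))^3)) := by
  have criticalValue_eq {m : ℕ} (hm : (8:ℝ) ≤ m) :
      1 / (24 * √3) * (3 * √3 * (6*(m:ℝ) + 1) - √(4*(m:ℝ) - 1)^3) =
        criticalValuePoly √(12*(m:ℝ) - 3) := by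
    rw [sqrt_twelve_mul_sub_three, criticalValuePoly_sqrt_three_mul (sq_sqrt (by linarith))]
  have hn8 : (8:ℝ) ≤ n := by exact_mod_cast hn
  have hs : √(12*(n:ℝ) - 3)^2 = 12*n - 3 := sq_sqrt (by linarith)
  refine ⟨div_pos ?_ (by linarith), deriv_G_eq_zero_of_sq_eq hs, ?_, fun m k hm hmk => ?_⟩
  · linarith [nine_lt_sqrt_twelve_mul_sub_three (x := n) (by linarith)]
  · rw [criticalValue_eq hn8]
    exact G_eq_criticalValuePoly_of_sq_eq hs
  · have hm8 : (8:ℝ) ≤ m := by exact_mod_cast hm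
    have hmk' : (m:ℝ) < k := by exact_mod_cast hmk
    rw [criticalValue_eq hm8, criticalValue_eq (by linarith)]
    exact criticalValuePoly_strictAntiOn (nine_lt_sqrt_twelve_mul_sub_three (by linarith)).le
      (nine_lt_sqrt_twelve_mul_sub_three (by linarith)).le (sqrt_lt_sqrt (by linarith) (by linarith))
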